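/- arXiv:2603.15111 — 2 statements merged into one kernel-verified Lean document; each statement's English description precedes it below -/
import Mathlib

section
/- Let p be a positive integer and let K, L ∈ ℍ^{p×p} be Hermitian quaternionic matrices with K positive definite. Then the Sylvester equation KS + SK = L has a unique solution S ∈ ℍ^{p×p}, and this unique solution is Hermitian. -/
open Matrix
open scoped Quaternion

/-! The map `S ↦ K S + S K` is `ℝ`-linear on a finite-dimensional space, so it suffices to show
it is injective. Although the quaternionic trace is not cyclic, its real part is; hence pairing
`K S + S K = 0` with `Sᴴ` gives `re tr (Sᴴ K S) + re tr (S K Sᴴ) = 0`. Both terms are sums of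
values of the positive definite form of `K` on the columns of `S` and of `Sᴴ`, so `S = 0`.
Taking `ᴴ` of the equation shows that `Sᴴ` solves it whenever `S` does, so by uniqueness the
solution is Hermitian. -/

lemma Quaternion.re_sum {R ι : Type*} [CommRing R] (s : Finset ι) (f : ι → ℍ[R]) :
    (∑ i ∈ s, f i).re = ∑ i ∈ s, (f i).re :=
  map_sum (QuaternionAlgebra.reₗ (-1) 0 (-1)) f s

lemma Quaternion.re_mul_comm {R : Type*} [CommRing R] (a b : ℍ[R]) : (a * b).re = (b * a).re := by
  simp only [Quaternion.re_mul]; ring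

namespace Matrix

variable {n : Type*} [Fintype n]

lemma re_trace_mul_comm (A B : Matrix n n ℍ[ℝ]) : (A * B).trace.re = (B * A).trace.re := by
  simp only [trace, diag, mul_apply, Quaternion.re_sum]
  rw [Finset.sum_comm]
  simp only [Quaternion.re_mul_comm (A _ _)]

lemma re_trace_conjTranspose_mul_mul (K S : Matrix n n ℍ[ℝ]) :
    (Sᴴ * K * S).trace.re = ∑ j, (star (Sᵀ j) ⬝ᵥ K *ᵥ Sᵀ j).re := by
  simp [Matrix.mul_assoc, trace, mul_apply, dotProduct, mulVec, Quaternion.re_sum]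

lemma conjTranspose_mul_add_mul {α : Type*} [NonUnitalSemiring α] [StarRing α]
    {K : Matrix n n α} (hK : Kᴴ = K) (S : Matrix n n α) :
    (K * S + S * K)ᴴ = K * Sᴴ + Sᴴ * K := by
  rw [conjTranspose_add, conjTranspose_mul, conjTranspose_mul, hK, add_comm]

variable {K : Matrix n n ℍ[ℝ]}

lemma re_dotProduct_mulVec_nonneg
    (hKpd : ∀ x : n → ℍ[ℝ], x ≠ 0 → 0 < (star x ⬝ᵥ K *ᵥ x).re) (x : n → ℍ[ℝ]) :
    0 ≤ (star x ⬝ᵥ K *ᵥ x).re := by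
  rcases eq_or_ne x 0 with rfl | hx
  · simp
  · exact (hKpd x hx).le

lemma re_trace_conjTranspose_mul_mul_nonneg
    (hKpd : ∀ x : n → ℍ[ℝ], x ≠ 0 → 0 < (star x ⬝ᵥ K *ᵥ x).re) (S : Matrix n n ℍ[ℝ]) :
    0 ≤ (Sᴴ * K * S).trace.re := by
  rw [re_trace_conjTranspose_mul_mul]
  exact Finset.sum_nonneg fun j _ => re_dotProduct_mulVec_nonneg hKpd _

lemma eq_zero_of_re_trace_conjTranspose_mul_mul_eq_zero
    (hKpd : ∀ x : n → ℍ[ℝ], x ≠ 0 → 0 < (star x ⬝ᵥ K *ᵥ x).re) {S : Matrix n n ℍ[ℝ]}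
    (hS : (Sᴴ * K * S).trace.re = 0) : S = 0 := by
  rw [re_trace_conjTranspose_mul_mul] at hS
  suffices Sᵀ = 0 from transpose_eq_zero.mp this
  funext j
  by_contra hj
  exact (Finset.sum_pos' (fun i _ => re_dotProduct_mulVec_nonneg hKpd _)
    ⟨j, Finset.mem_univ j, hKpd _ hj⟩).ne' hS

lemma eq_zero_of_mul_add_mul_eq_zero
    (hKpd : ∀ x : n → ℍ[ℝ], x ≠ 0 → 0 < (star x ⬝ᵥ K *ᵥ x).re) {S : Matrix n n ℍ[ℝ]}
    (hS : K * S + S * K = 0) : S = 0 := by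
  have hsplit : (Sᴴ * (K * S + S * K)).trace.re
      = (Sᴴ * K * S).trace.re + (Sᴴᴴ * K * Sᴴ).trace.re := by
    rw [conjTranspose_conjTranspose, Matrix.mul_add, trace_add, Quaternion.re_add,
      ← Matrix.mul_assoc, ← Matrix.mul_assoc, Matrix.mul_assoc Sᴴ S K, re_trace_mul_comm Sᴴ]
  rw [hS, Matrix.mul_zero, trace_zero, Quaternion.re_zero] at hsplit
  have h₁ := re_trace_conjTranspose_mul_mul_nonneg hKpd S
  have h₂ := re_trace_conjTranspose_mul_mul_nonneg hKpd Sᴴ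
  exact eq_zero_of_re_trace_conjTranspose_mul_mul_eq_zero hKpd (by linarith)

def sylvesterMap (K : Matrix n n ℍ[ℝ]) : Matrix n n ℍ[ℝ] →ₗ[ℝ] Matrix n n ℍ[ℝ] :=
  LinearMap.mulLeft ℝ K + LinearMap.mulRight ℝ K

@[simp]
lemma sylvesterMap_apply (K S : Matrix n n ℍ[ℝ]) : sylvesterMap K S = K * S + S * K := rfl

lemma sylvesterMap_bijective
    (hKpd : ∀ x : n → ℍ[ℝ], x ≠ 0 → 0 < (star x ⬝ᵥ K *ᵥ x).re) :
    Function.Bijective (sylvesterMap K) := by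
  have hinj : Function.Injective (sylvesterMap K) :=
    (injective_iff_map_eq_zero _).mpr fun _ => eq_zero_of_mul_add_mul_eq_zero hKpd
  exact ⟨hinj, LinearMap.injective_iff_surjective.mp hinj⟩

end Matrix

theorem quaternionic_sylvester_unique_hermitian_solution_general (p : ℕ)
    (K L : Matrix (Fin p) (Fin p) ℍ[ℝ]) (hK : Kᴴ = K) (hL : Lᴴ = L)
    (hKpd : ∀ x : Fin p → ℍ[ℝ], x ≠ 0 → 0 < (star x ⬝ᵥ K *ᵥ x).re) :
    (∃! S : Matrix (Fin p) (Fin p) ℍ[ℝ], K * S + S * K = L) ∧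
      ∀ S : Matrix (Fin p) (Fin p) ℍ[ℝ], K * S + S * K = L → Sᴴ = S := by
  have hbij := sylvesterMap_bijective hKpd
  refine ⟨hbij.existsUnique L, fun S hS => hbij.injective ?_⟩
  rw [sylvesterMap_apply, sylvesterMap_apply, ← conjTranspose_mul_add_mul hK, hS, hL]

/-- For Hermitian `K, L ∈ ℍ^{p×p}` with `K` positive definite, the Sylvester equation
`KS + SK = L` has a unique solution, and this solution is Hermitian. -/
theorem quaternionic_sylvester_unique_hermitian_solution (p : ℕ) (hp : 0 < p)
    (K L : Matrix (Fin p) (Fin p) ℍ[ℝ]) (hK : Kᴴ = K) (hL : Lᴴ = L)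
    (hKpd : ∀ x : Fin p → ℍ[ℝ], x ≠ 0 → 0 < (star x ⬝ᵥ K *ᵥ x).re) :
    (∃! S : Matrix (Fin p) (Fin p) ℍ[ℝ], K * S + S * K = L) ∧
      ∀ S : Matrix (Fin p) (Fin p) ℍ[ℝ], K * S + S * K = L → Sᴴ = S :=
  quaternionic_sylvester_unique_hermitian_solution_general p K L hK hL hKpd
end

section
/- Let p ≤ n be positive integers, let G ∈ ℍ^{n×n} be Hermitian positive definite, let X ∈ ℍ^{n×p} satisfy XᴴGX = I_p, and let Y ∈ ℍ^{n×p} be arbitrary. Define Z := Y − X·her(XᴴGY). Then: (i) ZᴴGX + XᴴGZ = 0, and (ii) re(tr(ξᴴG(Y − Z))) = 0 for every ξ ∈ ℍ^{n×p} with ξᴴGX + XᴴGξ = 0. That is, Y ↦ Y − X·her(XᴴGY) is the orthogonal projection onto the tangent space at X with respect to the inner product ⟨ξ,η⟩ = re(tr(ξᴴGη)). -/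
/-!
Put `S = her (XᴴGY)`, which is Hermitian, so that `Y - Z = XS`. Since `XᴴGX = I`,
`XᴴGZ = XᴴGY - S` is the skew-Hermitian part of `XᴴGY`, and `ZᴴGX = (XᴴGZ)ᴴ` because `G` is
Hermitian; this is (i). For a tangent `ξ` the tangency equation says that `ξᴴGX` is
skew-Hermitian, and `ξᴴG(Y - Z) = (ξᴴGX) S`. The real part of the trace is invariant under
cyclic permutation and under conjugate transposition, so it vanishes on the product of a
skew-Hermitian and a Hermitian matrix; this is (ii).
-/

open Matrix
open scoped Quaternion

/-- Hermitian part of a square quaternionic matrix. -/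
noncomputable def her {p : ℕ} (A : Matrix (Fin p) (Fin p) ℍ[ℝ]) : Matrix (Fin p) (Fin p) ℍ[ℝ] :=
  (2⁻¹ : ℝ) • (A + Aᴴ)

namespace Quaternion

variable {R : Type*} [CommRing R]

instance [StarRing R] [TrivialStar R] : StarModule R ℍ[R] :=
  ⟨fun r a => by rw [Quaternion.star_smul, star_trivial r]⟩

theorem re_mul_comm_s9 (a b : ℍ[R]) : (a * b).re = (b * a).re := by
  simp only [re_mul]
  ring

theorem re_sum_s9 {ι : Type*} (s : Finset ι) (f : ι → ℍ[R]) :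
    (∑ i ∈ s, f i).re = ∑ i ∈ s, (f i).re :=
  map_sum (QuaternionAlgebra.reₗ _ _ _) f s

theorem re_trace_mul_comm {m k : Type*} [Fintype m] [Fintype k]
    (A : Matrix m k ℍ[R]) (B : Matrix k m ℍ[R]) : (A * B).trace.re = (B * A).trace.re := by
  simp only [trace, diag, mul_apply, re_sum_s9]
  rw [Finset.sum_comm]
  simp only [re_mul_comm_s9]

end Quaternion

namespace Matrix

theorem IsHermitian.conjTranspose_mul_mul_eq {α m n k : Type*} [NonUnitalSemiring α] [StarRing α]
    [Fintype m] {G : Matrix m m α} (hG : G.IsHermitian) (A : Matrix m n α) (B : Matrix m k α) :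
    (Aᴴ * G * B)ᴴ = Bᴴ * G * A := by
  rw [conjTranspose_mul, conjTranspose_mul, conjTranspose_conjTranspose, hG.eq, Matrix.mul_assoc]

theorem IsHermitian.re_trace_skew_mul_eq_zero {R m : Type*} [CommRing R] [NoZeroDivisors R]
    [CharZero R] [Fintype m]
    {S A : Matrix m m ℍ[R]} (hS : S.IsHermitian) (hA : Aᴴ = -A) : (A * S).trace.re = 0 := by
  refine self_eq_neg.mp ?_
  calc (A * S).trace.re = (star (A * S).trace).re := (Quaternion.re_star _).symm
    _ = (S * -A).trace.re := by rw [← trace_conjTranspose, conjTranspose_mul, hA, hS.eq]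
    _ = -(A * S).trace.re := by
      rw [Matrix.mul_neg, trace_neg, Quaternion.re_neg, Quaternion.re_trace_mul_comm]

end Matrix

theorem isHermitian_her {p : ℕ} (A : Matrix (Fin p) (Fin p) ℍ[ℝ]) : (her A).IsHermitian := by
  simp only [IsHermitian, her, conjTranspose_smul, star_trivial, conjTranspose_add,
    conjTranspose_conjTranspose, add_comm]

theorem conjTranspose_sub_her {p : ℕ} (A : Matrix (Fin p) (Fin p) ℍ[ℝ]) :
    (A - her A)ᴴ = -(A - her A) := by
  simp only [her, conjTranspose_sub, conjTranspose_smul, star_trivial, conjTranspose_add,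
    conjTranspose_conjTranspose]
  module

theorem projection_generalized_quaternionic_stiefel_G_general (n p : ℕ)
    (G : Matrix (Fin n) (Fin n) ℍ[ℝ]) (hG : Gᴴ = G)
    (X : Matrix (Fin n) (Fin p) ℍ[ℝ]) (hX : Xᴴ * G * X = 1)
    (Y : Matrix (Fin n) (Fin p) ℍ[ℝ])
    (Z : Matrix (Fin n) (Fin p) ℍ[ℝ]) (hZ : Z = Y - X * her (Xᴴ * G * Y)) :
    Zᴴ * G * X + Xᴴ * G * Z = 0 ∧
      ∀ ξ : Matrix (Fin n) (Fin p) ℍ[ℝ], ξᴴ * G * X + Xᴴ * G * ξ = 0 →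
        ((ξᴴ * (G * (Y - Z))).trace).re = 0 := by
  have hGh : G.IsHermitian := hG
  have hXGZ : Xᴴ * G * Z = Xᴴ * G * Y - her (Xᴴ * G * Y) := by
    rw [hZ, Matrix.mul_sub, ← Matrix.mul_assoc, hX, Matrix.one_mul]
  have hYZ : Y - Z = X * her (Xᴴ * G * Y) := by rw [hZ, sub_sub_cancel]
  refine ⟨?_, fun ξ hξ => ?_⟩
  · rw [← hGh.conjTranspose_mul_mul_eq X Z, hXGZ, conjTranspose_sub_her, neg_add_cancel]
  · have hskew : (ξᴴ * G * X)ᴴ = -(ξᴴ * G * X) := by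
      rw [hGh.conjTranspose_mul_mul_eq]
      exact eq_neg_of_add_eq_zero_right hξ
    rw [hYZ, ← Matrix.mul_assoc, ← Matrix.mul_assoc]
    exact (isHermitian_her _).re_trace_skew_mul_eq_zero hskew

/-- When the metric is `⟨ξ,η⟩ = re(tr(ξᴴGη))`, `Z = Y − X·her(XᴴGY)` is the orthogonal
projection of `Y` onto the tangent space at `X` of the generalized quaternionic Stiefel
manifold: `Z` is tangent and `Y − Z` is orthogonal to every tangent vector. -/
theorem projection_generalized_quaternionic_stiefel_G (n p : ℕ) (hp : 0 < p) (hpn : p ≤ n)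
    (G : Matrix (Fin n) (Fin n) ℍ[ℝ]) (hG : Gᴴ = G)
    (hGpd : ∀ x : Fin n → ℍ[ℝ], x ≠ 0 → 0 < (star x ⬝ᵥ G *ᵥ x).re)
    (X : Matrix (Fin n) (Fin p) ℍ[ℝ]) (hX : Xᴴ * G * X = 1)
    (Y : Matrix (Fin n) (Fin p) ℍ[ℝ])
    (Z : Matrix (Fin n) (Fin p) ℍ[ℝ]) (hZ : Z = Y - X * her (Xᴴ * G * Y)) :
    Zᴴ * G * X + Xᴴ * G * Z = 0 ∧
      ∀ ξ : Matrix (Fin n) (Fin p) ℍ[ℝ], ξᴴ * G * X + Xᴴ * G * ξ = 0 →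
        ((ξᴴ * (G * (Y - Z))).trace).re = 0 :=
  projection_generalized_quaternionic_stiefel_G_general n p G hG X hX Y Z hZ
end
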